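/- arXiv:2509.12018 — 3 statements merged into one kernel-verified Lean document; each statement's English description precedes it below -/
import Mathlib

section
/- Let λ > 0 and let φ: ℝ → ℝ be Lipschitz and bounded below. Then for every x ∈ ℝ, M^λφ(x) = −λ · log ∫ exp(−(φ(x+ζ) + l(ζ))/λ) dΦ_x(ζ), and the integral on the right-hand side is a finite positive real number. -/
open MeasureTheory ProbabilityTheory Real Filter
open scoped Classical

noncomputable section

/-- The Gaussian measure `Φ_x` on `ℝ` with mean `-x` and variance `1`. -/
def Phi (x : ℝ) : Measure ℝ := gaussianReal (-x) 1

/-- Extended-real value of `∫ f dμ`: the Bochner integral when `f` is integrable,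
and `+∞` otherwise (the appropriate convention for functions bounded below). -/
def eInt (f : ℝ → ℝ) (μ : Measure ℝ) : EReal :=
  if Integrable f μ then ((∫ ξ, f ξ ∂μ : ℝ) : EReal) else ⊤

/-- Kullback–Leibler divergence `D_KL(μ‖ν) = ∫ log (dμ/dν) dμ`, equal to `+∞` if `μ` is
not absolutely continuous with respect to `ν` (or if the integral does not exist). -/
def klDiv' (μ ν : Measure ℝ) : EReal :=
  if μ ≪ ν ∧ Integrable (fun ξ => Real.log ((μ.rnDeriv ν ξ).toReal)) μ
  then ((∫ ξ, Real.log ((μ.rnDeriv ν ξ).toReal) ∂μ : ℝ) : EReal) else ⊤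

/-- The randomized nonlocal operator `M^λ`. -/
def Mlam (l : ℝ → ℝ) (lam : ℝ) (φ : ℝ → ℝ) (x : ℝ) : EReal :=
  ⨅ μ : {μ : Measure ℝ // IsProbabilityMeasure μ ∧ μ ≪ Phi x},
    eInt (fun ξ => φ (x + ξ) + l ξ) μ.1 + (lam : EReal) * klDiv' μ.1 (Phi x)

/-- The classical nonlocal operator `M`. -/
def Mcl (l : ℝ → ℝ) (φ : ℝ → ℝ) (x : ℝ) : ℝ := ⨅ ξ : ℝ, (φ (x + ξ) + l ξ)

/-- `φ` is bounded from below. -/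
def BddBelowFun (φ : ℝ → ℝ) : Prop := ∃ m : ℝ, ∀ y, m ≤ φ y

/-- `φ` is of polynomial growth. -/
def PolyGrowth (φ : ℝ → ℝ) : Prop :=
  ∃ β : ℝ, 0 ≤ β ∧ ∃ C : ℝ, ∀ y : ℝ, |φ y| ≤ C * (1 + |y| ^ β)

/-- The standing hypotheses on the intervention cost `l`. -/
structure CostHyp (l : ℝ → ℝ) (K Ll : ℝ) : Prop where
  K_pos : 0 < K
  l_zero : l 0 = K
  l_lb : ∀ x, K ≤ l x
  l_subadd : ∀ x y, l (x + y) + K ≤ l x + l y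
  l_coercive : Filter.Tendsto l (Filter.cocompact ℝ) Filter.atTop
  Ll_pos : 0 < Ll
  l_lip : ∀ x y, |l x - l y| ≤ Ll * |x - y|

/-!
Gibbs variational principle. Let `g ζ = φ (x + ζ) + l ζ`, `Z = ∫ exp (-g/λ) dΦ_x` and let
`ρ = Φ_x.tilted (-g/λ)` be the Gibbs measure. For every admissible `μ`,
`∫ g dμ + λ D_KL(μ‖Φ_x) = λ D_KL(μ‖ρ) - λ log Z ≥ -λ log Z` by Gibbs' inequality, with equality
at `μ = ρ`. Since `g` is bounded below, `exp (-g/λ)` and `g exp (-g/λ)` are bounded, so `Z` is finite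
and `g` is `ρ`-integrable.
-/

section GibbsVariational

variable {α : Type*} [MeasurableSpace α] {ν : Measure α} {f : α → ℝ}

lemma integral_llr_nonneg {μ : Measure α} [IsProbabilityMeasure μ] [IsProbabilityMeasure ν]
    (hμν : μ ≪ ν) (h_int : Integrable (llr μ ν) μ) : 0 ≤ ∫ x, llr μ ν x ∂μ := by
  simpa using InformationTheory.integral_llr_add_sub_measure_univ_nonneg hμν h_int

/-- Donsker–Varadhan inequality. -/
lemma integral_sub_integral_llr_le_log_integral_exp {μ : Measure α} [IsProbabilityMeasure μ]
    [IsProbabilityMeasure ν] (hμν : μ ≪ ν) (hfμ : Integrable f μ)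
    (hfν : Integrable (fun x ↦ exp (f x)) ν) (h_int : Integrable (llr μ ν) μ) :
    ∫ x, f x ∂μ - ∫ x, llr μ ν x ∂μ ≤ log (∫ x, exp (f x) ∂ν) := by
  have := isProbabilityMeasure_tilted hfν
  have hgibbs := integral_llr_nonneg (hμν.trans (absolutelyContinuous_tilted hfν))
    (integrable_llr_tilted_right hμν hfμ h_int hfν)
  rw [integral_llr_tilted_right hμν hfμ hfν h_int] at hgibbs
  linarith

lemma llr_tilted_self_ae_eq [SigmaFinite ν] (hfν : Integrable (fun x ↦ exp (f x)) ν) :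
    llr (ν.tilted f) ν =ᵐ[ν.tilted f] fun x ↦ f x - log (∫ x, exp (f x) ∂ν) :=
  (tilted_absolutelyContinuous ν f).ae_le (log_rnDeriv_tilted_left_self hfν)

lemma integrable_llr_tilted_self [SigmaFinite ν] (hfν : Integrable (fun x ↦ exp (f x)) ν)
    (hf : Integrable f (ν.tilted f)) : Integrable (llr (ν.tilted f) ν) (ν.tilted f) := by
  rw [integrable_congr (llr_tilted_self_ae_eq hfν)]
  exact hf.sub (integrable_const _)

lemma integral_sub_integral_llr_tilted_self [IsProbabilityMeasure ν]
    (hfν : Integrable (fun x ↦ exp (f x)) ν) (hf : Integrable f (ν.tilted f)) :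
    ∫ x, f x ∂(ν.tilted f) - ∫ x, llr (ν.tilted f) ν x ∂(ν.tilted f)
      = log (∫ x, exp (f x) ∂ν) := by
  have := isProbabilityMeasure_tilted hfν
  rw [integral_congr_ae (llr_tilted_self_ae_eq hfν), integral_sub hf (integrable_const _)]
  simp

end GibbsVariational

lemma continuous_of_abs_sub_le_mul {L : ℝ} {f : ℝ → ℝ} (h : ∀ a b, |f a - f b| ≤ L * |a - b|) :
    Continuous f :=
  (LipschitzWith.of_dist_le' (K := L) fun a b ↦ by simpa only [Real.dist_eq] using h a b).continuous

lemma abs_mul_exp_neg_div_le {lam m t : ℝ} (hlam : 0 < lam) (hmt : m ≤ t) :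
    |t| * exp (-t / lam) ≤ (|m| + lam) * exp (-m / lam) := by
  have h_shift : (t - m) * exp (-t / lam)
      = lam * ((t - m) / lam * exp (-((t - m) / lam))) * exp (-m / lam) := by
    rw [mul_assoc lam, mul_assoc, ← exp_add]
    field_simp
    ring_nf
  have h_peak : (t - m) / lam * exp (-((t - m) / lam)) ≤ 1 :=
    (mul_exp_neg_le_exp_neg_one _).trans (exp_le_one_iff.mpr (by norm_num))
  have h_diff : (t - m) * exp (-t / lam) ≤ lam * exp (-m / lam) := by
    rw [h_shift]
    gcongr
    exact mul_le_of_le_one_right hlam.le h_peak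
  have h_exp : exp (-t / lam) ≤ exp (-m / lam) := by gcongr
  have h_abs : |t| ≤ (t - m) + |m| := by
    have := abs_sub_abs_le_abs_sub t m
    rw [abs_of_nonneg (sub_nonneg.mpr hmt)] at this
    linarith
  calc |t| * exp (-t / lam) ≤ ((t - m) + |m|) * exp (-t / lam) := by gcongr
    _ ≤ lam * exp (-m / lam) + |m| * exp (-m / lam) := by
      rw [add_mul]; gcongr
    _ = (|m| + lam) * exp (-m / lam) := by ring

section BoundedBelow

variable {α : Type*} [MeasurableSpace α] {ν : Measure α} [IsFiniteMeasure ν] {g : α → ℝ}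
  {lam m : ℝ}

lemma integrable_exp_neg_div_of_le (hg : Measurable g) (hlam : 0 < lam) (hm : ∀ x, m ≤ g x) :
    Integrable (fun x ↦ exp (-g x / lam)) ν := by
  refine (integrable_const (exp (-m / lam))).mono' (by fun_prop) (ae_of_all _ fun x ↦ ?_)
  rw [norm_of_nonneg (exp_pos _).le]
  gcongr
  exact hm x

lemma integrable_tilted_neg_div_of_le (hg : Measurable g) (hlam : 0 < lam) (hm : ∀ x, m ≤ g x) :
    Integrable g (ν.tilted fun x ↦ -g x / lam) := by
  rw [integrable_tilted_iff (integrable_exp_neg_div_of_le hg hlam hm)]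
  refine (integrable_const ((|m| + lam) * exp (-m / lam))).mono' (by fun_prop)
    (ae_of_all _ fun x ↦ ?_)
  rw [smul_eq_mul, norm_mul, norm_of_nonneg (exp_pos _).le, Real.norm_eq_abs, mul_comm]
  exact abs_mul_exp_neg_div_le hlam (hm x)

end BoundedBelow

section Functional

variable {ν μ : Measure ℝ} {g : ℝ → ℝ} {lam : ℝ}

lemma eInt_ne_bot (g : ℝ → ℝ) (μ : Measure ℝ) : eInt g μ ≠ ⊥ := by
  unfold eInt; split <;> simp

lemma klDiv'_eq_integral_llr (hμν : μ ≪ ν) (h_int : Integrable (llr μ ν) μ) :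
    klDiv' μ ν = ((∫ x, llr μ ν x ∂μ : ℝ) : EReal) :=
  if_pos ⟨hμν, h_int⟩

lemma klDiv'_of_not_integrable (h_int : ¬ Integrable (llr μ ν) μ) : klDiv' μ ν = ⊤ :=
  if_neg fun h ↦ h_int h.2

lemma neg_mul_log_integral_exp_le [IsProbabilityMeasure ν] [IsProbabilityMeasure μ]
    (hμν : μ ≪ ν) (hlam : 0 < lam) (hexp : Integrable (fun x ↦ exp (-g x / lam)) ν) :
    ((-lam * log (∫ x, exp (-g x / lam) ∂ν) : ℝ) : EReal)
      ≤ eInt g μ + (lam : EReal) * klDiv' μ ν := by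
  by_cases h_int : Integrable (llr μ ν) μ
  swap
  · rw [klDiv'_of_not_integrable h_int, EReal.coe_mul_top_of_pos hlam,
      EReal.add_top_of_ne_bot (eInt_ne_bot g μ)]
    exact le_top
  by_cases hg : Integrable g μ
  swap
  · rw [eInt, if_neg hg, klDiv'_eq_integral_llr hμν h_int, ← EReal.coe_mul,
      EReal.top_add_of_ne_bot (EReal.coe_ne_bot _)]
    exact le_top
  have hdv := integral_sub_integral_llr_le_log_integral_exp (f := fun x ↦ -g x / lam) hμν
    (hg.neg.div_const lam) hexp h_int
  rw [integral_div, integral_neg] at hdv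
  have hreal : -lam * log (∫ x, exp (-g x / lam) ∂ν) ≤ ∫ x, g x ∂μ + lam * ∫ x, llr μ ν x ∂μ := by
    have := mul_le_mul_of_nonneg_left hdv hlam.le
    rw [mul_sub, mul_div_cancel₀ _ hlam.ne'] at this
    linarith
  rw [eInt, if_pos hg, klDiv'_eq_integral_llr hμν h_int, ← EReal.coe_mul, ← EReal.coe_add]
  exact EReal.coe_le_coe_iff.mpr hreal

lemma eInt_add_mul_klDiv'_tilted [IsProbabilityMeasure ν] (hlam : 0 < lam)
    (hexp : Integrable (fun x ↦ exp (-g x / lam)) ν)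
    (hg : Integrable g (ν.tilted fun x ↦ -g x / lam)) :
    eInt g (ν.tilted fun x ↦ -g x / lam) + (lam : EReal) * klDiv' (ν.tilted fun x ↦ -g x / lam) ν
      = ((-lam * log (∫ x, exp (-g x / lam) ∂ν) : ℝ) : EReal) := by
  have hf : Integrable (fun x ↦ -g x / lam) (ν.tilted fun x ↦ -g x / lam) := hg.neg.div_const lam
  have hgibbs := integral_sub_integral_llr_tilted_self hexp hf
  rw [integral_div, integral_neg] at hgibbs
  rw [eInt, if_pos hg, klDiv'_eq_integral_llr (tilted_absolutelyContinuous _ _)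
    (integrable_llr_tilted_self hexp hf), ← EReal.coe_mul, ← EReal.coe_add, ← hgibbs]
  congr 1
  field_simp
  ring

theorem iInf_eInt_add_mul_klDiv' [IsProbabilityMeasure ν] (hlam : 0 < lam)
    (hexp : Integrable (fun x ↦ exp (-g x / lam)) ν)
    (hg : Integrable g (ν.tilted fun x ↦ -g x / lam)) :
    ⨅ μ : {μ : Measure ℝ // IsProbabilityMeasure μ ∧ μ ≪ ν}, eInt g μ.1 + (lam : EReal) * klDiv' μ.1 ν
      = ((-lam * log (∫ x, exp (-g x / lam) ∂ν) : ℝ) : EReal) := by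
  refine le_antisymm ?_ (le_iInf fun ⟨μ, _, hμν⟩ ↦ neg_mul_log_integral_exp_le hμν hlam hexp)
  exact iInf_le_of_le ⟨_, isProbabilityMeasure_tilted hexp, tilted_absolutelyContinuous _ _⟩
    (eInt_add_mul_klDiv'_tilted hlam hexp hg).le

end Functional

/-- for `φ` Lipschitz and bounded below,
`M^λφ(x) = −λ log ∫ exp(−(φ(x+ζ)+l(ζ))/λ) dΦ_x(ζ)`, the integral being a finite
positive real number. -/
theorem stmt_4 (l : ℝ → ℝ) (K Ll : ℝ) (hl : CostHyp l K Ll)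
    (lam : ℝ) (hlam : 0 < lam)
    (φ : ℝ → ℝ) (hφlip : ∃ Lφ : ℝ, ∀ a b, |φ a - φ b| ≤ Lφ * |a - b|)
    (hφb : BddBelowFun φ) (x : ℝ) :
    Integrable (fun ζ => Real.exp (-(φ (x + ζ) + l ζ) / lam)) (Phi x) ∧
    0 < ∫ ζ, Real.exp (-(φ (x + ζ) + l ζ) / lam) ∂(Phi x) ∧
    Mlam l lam φ x
      = ((-lam * Real.log (∫ ζ, Real.exp (-(φ (x + ζ) + l ζ) / lam) ∂(Phi x)) : ℝ) : EReal) := by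
  obtain ⟨Lφ, hφlip⟩ := hφlip
  obtain ⟨m, hm⟩ := hφb
  have : IsProbabilityMeasure (Phi x) := by unfold Phi; infer_instance
  have hg : Measurable fun ζ ↦ φ (x + ζ) + l ζ :=
    ((continuous_of_abs_sub_le_mul hφlip).comp (continuous_const_add x)
      |>.add (continuous_of_abs_sub_le_mul hl.l_lip)).measurable
  have hg_lb : ∀ ζ, m + K ≤ φ (x + ζ) + l ζ := fun ζ ↦ add_le_add (hm _) (hl.l_lb ζ)
  have hexp := integrable_exp_neg_div_of_le (ν := Phi x) hg hlam hg_lb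
  exact ⟨hexp, integral_exp_pos hexp,
    iInf_eInt_add_mul_klDiv' hlam hexp (integrable_tilted_neg_div_of_le hg hlam hg_lb)⟩
end
end

section
/- Let λ > 0 and let φ: ℝ → ℝ be Lipschitz and bounded below. Then the function x ↦ M^λφ(x) is Lipschitz with constant L_l, i.e. |M^λφ(x) − M^λφ(y)| ≤ L_l·|x − y| for all x, y ∈ ℝ. -/
/-!
Translating a competitor `μ` for `M^λφ(y)` by `y - x` gives a competitor for `M^λφ(x)`.
Since `Φ_y` is carried onto `Φ_x` by the same translation, the relative entropy is unchanged,
and the expected cost of `φ(x + ·) + l` under the translated measure differs from that of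
`φ(y + ·) + l` under `μ` only through `l(ξ + y - x) - l(ξ) ≤ L_l |x - y|`.
-/

open MeasureTheory ProbabilityTheory Real Filter
open scoped Classical

noncomputable section

instance (x : ℝ) : IsProbabilityMeasure (Phi x) := by
  unfold Phi
  infer_instance

lemma Phi_map_add_const (y c : ℝ) : (Phi y).map (· + c) = Phi (y - c) := by
  rw [Phi, Phi, gaussianReal_map_add_const, neg_sub, sub_eq_neg_add]

lemma MeasurableEmbedding.absolutelyContinuous_map_iff {α β : Type*} [MeasurableSpace α]
    [MeasurableSpace β] {f : α → β} (hf : MeasurableEmbedding f) {μ ν : Measure α} :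
    μ.map f ≪ ν.map f ↔ μ ≪ ν := by
  refine ⟨fun h => Measure.AbsolutelyContinuous.mk fun s hs hνs => ?_,
    hf.absolutelyContinuous_map⟩
  have h_pre : f ⁻¹' (f '' s) = s := hf.injective.preimage_image s
  have := @h (f '' s) (by rw [hf.map_apply, h_pre, hνs])
  rwa [hf.map_apply, h_pre] at this

lemma klDiv'_map {f : ℝ → ℝ} (hf : MeasurableEmbedding f) (μ ν : Measure ℝ)
    [SigmaFinite μ] [SigmaFinite ν] : klDiv' (μ.map f) (ν.map f) = klDiv' μ ν := by
  unfold klDiv'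
  by_cases hμν : μ ≪ ν
  swap
  · rw [if_neg (by rw [hf.absolutelyContinuous_map_iff]; tauto), if_neg (by tauto)]
  have h_log : (fun ξ => Real.log (((μ.map f).rnDeriv (ν.map f) (f ξ)).toReal))
      =ᵐ[μ] fun ξ => Real.log ((μ.rnDeriv ν ξ).toReal) := by
    filter_upwards [hμν.ae_le (hf.rnDeriv_map μ ν)] with ξ hξ
    rw [hξ]
  have h_int : Integrable (fun ξ => Real.log (((μ.map f).rnDeriv (ν.map f) ξ).toReal))
      (μ.map f) ↔ Integrable (fun ξ => Real.log ((μ.rnDeriv ν ξ).toReal)) μ :=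
    hf.integrable_map_iff.trans (integrable_congr h_log)
  simp only [hf.absolutelyContinuous_map_iff, hμν, true_and, h_int]
  split_ifs
  · rw [hf.integral_map]
    exact congrArg _ (integral_congr_ae h_log)
  · rfl

lemma eInt_map {f : ℝ → ℝ} (hf : MeasurableEmbedding f) (g : ℝ → ℝ) (μ : Measure ℝ) :
    eInt g (μ.map f) = eInt (g ∘ f) μ := by
  unfold eInt
  rw [hf.integrable_map_iff, hf.integral_map]
  rfl

lemma eInt_le_add_of_sub_le {g h : ℝ → ℝ} {C : ℝ} (μ : Measure ℝ) [IsProbabilityMeasure μ]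
    (hgh : AEStronglyMeasurable (g - h) μ) (hC : ∀ ξ, |g ξ - h ξ| ≤ C) :
    eInt g μ ≤ eInt h μ + C := by
  unfold eInt
  by_cases hh : Integrable h μ
  swap
  · rw [if_neg hh, EReal.top_add_coe]
    exact le_top
  have h_diff : Integrable (g - h) μ :=
    Integrable.mono' (integrable_const C) hgh (Eventually.of_forall hC)
  have hg : Integrable g μ := by simpa using hh.add h_diff
  have h_diff_le : ∫ ξ, (g - h) ξ ∂μ ≤ C := by
    calc ∫ ξ, (g - h) ξ ∂μ ≤ ∫ _, C ∂μ :=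
          integral_mono h_diff (integrable_const C) fun ξ => (abs_le.mp (hC ξ)).2
      _ = C := by simp
  rw [if_pos hg, if_pos hh, ← EReal.coe_add, EReal.coe_le_coe_iff, ← sub_le_iff_le_add',
    ← integral_sub hg hh]
  exact h_diff_le

lemma EReal.le_iInf_add_coe {ι : Sort*} {a : EReal} {f : ι → EReal} {c : ℝ}
    (h : ∀ i, a ≤ f i + c) : a ≤ (⨅ i, f i) + c := by
  rw [← EReal.sub_le_iff_le_add (Or.inl (EReal.coe_ne_bot c)) (Or.inl (EReal.coe_ne_top c))]
  exact le_iInf fun i =>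
    (EReal.sub_le_iff_le_add (Or.inl (EReal.coe_ne_bot c)) (Or.inl (EReal.coe_ne_top c))).mpr (h i)

lemma Mlam_le_objective_add {l : ℝ → ℝ} {Ll : ℝ} (hl : ∀ a b, |l a - l b| ≤ Ll * |a - b|)
    (lam : ℝ) (φ : ℝ → ℝ) (x y : ℝ) (μ : Measure ℝ) [IsProbabilityMeasure μ]
    (hμ : μ ≪ Phi y) :
    Mlam l lam φ x ≤ eInt (fun ξ => φ (y + ξ) + l ξ) μ + (lam : EReal) * klDiv' μ (Phi y)
      + ((Ll * |x - y| : ℝ) : EReal) := by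
  set c := y - x
  have hf : MeasurableEmbedding (· + c) := (Homeomorph.addRight c).measurableEmbedding
  have hPhi : (Phi y).map (· + c) = Phi x := by rw [Phi_map_add_const, sub_sub_cancel]
  have hμ' : μ.map (· + c) ≪ Phi x := hPhi ▸ hf.absolutelyContinuous_map hμ
  have hl_cont : Continuous l :=
    (LipschitzWith.of_dist_le' (f := l) (K := Ll) (by simpa [Real.dist_eq] using hl)).continuous
  have h_shift : (fun ξ => φ (x + ξ) + l ξ) ∘ (· + c) = fun ξ => φ (y + ξ) + l (ξ + c) := by
    ext ξ
    simp only [Function.comp_apply, c]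
    ring_nf
  have h_cost : eInt (fun ξ => φ (y + ξ) + l (ξ + c)) μ
      ≤ eInt (fun ξ => φ (y + ξ) + l ξ) μ + ((Ll * |x - y| : ℝ) : EReal) := by
    refine eInt_le_add_of_sub_le μ ?_ fun ξ => ?_
    · have : Continuous fun ξ => l (ξ + c) - l ξ := by fun_prop
      simpa [Pi.sub_def] using this.aestronglyMeasurable
    · simpa [c, abs_sub_comm y x] using hl (ξ + c) ξ
  calc Mlam l lam φ x
      ≤ eInt (fun ξ => φ (x + ξ) + l ξ) (μ.map (· + c))
          + (lam : EReal) * klDiv' (μ.map (· + c)) (Phi x) :=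
        iInf_le_of_le ⟨_, Measure.isProbabilityMeasure_map hf.measurable.aemeasurable, hμ'⟩ le_rfl
    _ = eInt (fun ξ => φ (y + ξ) + l (ξ + c)) μ + (lam : EReal) * klDiv' μ (Phi y) := by
        rw [eInt_map hf, h_shift, ← hPhi, klDiv'_map hf]
    _ ≤ _ := by
        rw [add_right_comm]
        exact add_le_add_left h_cost _

/-- The absolute-value bound in `EReal` is expressed by the one-sided bound for all pairs. -/
theorem stmt_5_general (l : ℝ → ℝ) (K Ll : ℝ) (hl : CostHyp l K Ll)
    (lam : ℝ)
    (φ : ℝ → ℝ) :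
    ∀ x y : ℝ, Mlam l lam φ x ≤ Mlam l lam φ y + ((Ll * |x - y| : ℝ) : EReal) :=
  fun x y => EReal.le_iInf_add_coe fun μ =>
    haveI := μ.2.1
    Mlam_le_objective_add hl.l_lip lam φ x y μ.1 μ.2.2

/-- for `φ` Lipschitz and bounded below, `x ↦ M^λφ(x)` is Lipschitz with
constant `L_l` (the absolute-value bound in `EReal` is expressed by the one-sided
bound, which for all pairs `x, y` is equivalent). -/
theorem stmt_5 (l : ℝ → ℝ) (K Ll : ℝ) (hl : CostHyp l K Ll)
    (lam : ℝ) (hlam : 0 < lam)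
    (φ : ℝ → ℝ) (hφlip : ∃ Lφ : ℝ, ∀ a b, |φ a - φ b| ≤ Lφ * |a - b|)
    (hφb : BddBelowFun φ) :
    ∀ x y : ℝ, Mlam l lam φ x ≤ Mlam l lam φ y + ((Ll * |x - y| : ℝ) : EReal) :=
  stmt_5_general l K Ll hl lam φ
end
end

section
/- Let λ > 0 and let φ: ℝ → ℝ be Lipschitz with constant L_φ and bounded below. For x ∈ ℝ set Z(x) = ∫ exp(−(φ(x+ζ) + l(ζ))/λ) dΦ_x(ζ) and let μ_x be the probability measure on ℝ with density dμ_x/dΦ_x(ξ) = exp(−(φ(x+ξ) + l(ξ))/λ)/Z(x). Then there exist constants κ₁, κ₂ > 0, depending only on L_φ, L_l and λ (and not on x), such that for every x ∈ ℝ and every t ≥ 0, μ_x({ξ ∈ ℝ : |x + ξ| > t}) ≤ 2κ₁·exp(−κ₂ t²). -/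
open MeasureTheory ProbabilityTheory Real Filter
open scoped Classical

noncomputable section

/-- The Gibbs measure `μ_x` with density `dμ_x/dΦ_x(ξ) = exp(−(φ(x+ξ)+l(ξ))/λ)/Z(x)`,
where `Z(x) = ∫ exp(−(φ(x+ζ)+l(ζ))/λ) dΦ_x(ζ)`. -/
def gibbsMeasure (l : ℝ → ℝ) (lam : ℝ) (φ : ℝ → ℝ) (x : ℝ) : Measure ℝ :=
  (Phi x).withDensity fun ξ =>
    ENNReal.ofReal (Real.exp (-(φ (x + ξ) + l ξ) / lam) /
      ∫ ζ, Real.exp (-(φ (x + ζ) + l ζ) / lam) ∂(Phi x))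

open scoped ENNReal

/-!
Write `u = x + ξ` and `b = (L_φ + L_l) / λ`. By the Lipschitz bounds, the Gibbs weight
`exp (-(φ (x + ξ) + l ξ) / λ)` lies between `C e^{-b|u|}` and `C e^{b|u|}`, where `C` depends
on `x` only, so `C` cancels in the normalised density. Since `Φ_x` is the standard Gaussian `γ`
shifted by `-x`, this leaves `μ_x {t < |u|} ≤ ∫_{t < |u|} e^{b|u|} dγ / ∫ e^{-b|u|} dγ`.
Fernique's theorem gives `c > 0` with `∫ e^{c u²} dγ < ∞`; on `{t < |u|}` we have
`e^{b|u|} ≤ e^{-c t²/2} e^{b|u| + c u²/2}`, and the last function is `γ`-integrable.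
-/

instance isProbabilityMeasure_Phi (x : ℝ) : IsProbabilityMeasure (Phi x) := by
  unfold Phi
  infer_instance

/-- An inequality rather than an equality because of the junk value `∫ f ∂ν = 0` for
non-integrable `f`, in which case the left side vanishes. -/
theorem withDensity_ofReal_div_integral_apply_le {α : Type*} [MeasurableSpace α]
    {ν : Measure α} [SFinite ν] {f : α → ℝ} (hf : ∀ a, 0 ≤ f a) (s : Set α) :
    ν.withDensity (fun a => ENNReal.ofReal (f a / ∫ b, f b ∂ν)) s
      ≤ (∫⁻ a in s, ENNReal.ofReal (f a) ∂ν) / ∫⁻ a, ENNReal.ofReal (f a) ∂ν := by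
  rw [withDensity_apply']
  by_cases hZ : ∫ b, f b ∂ν = 0
  · simp [hZ]
  have hint : Integrable f ν := by
    by_contra h
    exact hZ (integral_undef h)
  have hZpos : 0 < ∫ b, f b ∂ν := (integral_nonneg hf).lt_of_ne' hZ
  rw [← ofReal_integral_eq_lintegral_ofReal hint (ae_of_all _ hf)]
  simp_rw [ENNReal.ofReal_div_of_pos hZpos, div_eq_mul_inv]
  rw [lintegral_mul_const' _ _ (by simpa using hZpos)]

theorem lintegral_Phi_comp_add (x : ℝ) (F : ℝ → ℝ≥0∞) :
    ∫⁻ ξ, F (x + ξ) ∂Phi x = ∫⁻ u, F u ∂gaussianReal 0 1 := by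
  have h : Phi x = (gaussianReal 0 1).map (MeasurableEquiv.addRight (-x)) := by
    rw [MeasurableEquiv.coe_addRight, gaussianReal_map_add_const, zero_add, Phi]
  rw [h, lintegral_map_equiv]
  simp [MeasurableEquiv.coe_addRight]

theorem lintegral_ofReal_exp_pos {α : Type*} [MeasurableSpace α] {μ : Measure α} [NeZero μ]
    {f : α → ℝ} (hf : Measurable f) : 0 < ∫⁻ a, ENNReal.ofReal (exp (f a)) ∂μ := by
  rw [lintegral_pos_iff_support (by fun_prop)]
  simp [Function.support, exp_pos, NeZero.ne μ]

theorem lintegral_ofReal_exp_mul_abs_add_mul_sq_lt_top {ν : Measure ℝ} {c : ℝ} (hc : 0 < c)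
    (hν : Integrable (fun u => exp (c * u ^ 2)) ν) (b : ℝ) {a : ℝ} (ha : a ≤ c / 2) :
    ∫⁻ u, ENNReal.ofReal (exp (b * |u| + a * u ^ 2)) ∂ν < ∞ := by
  have hpt (u : ℝ) : exp (b * |u| + a * u ^ 2) ≤ exp (b ^ 2 / (2 * c)) * exp (c * u ^ 2) := by
    rw [← exp_add, exp_le_exp]
    have hsq : 0 ≤ (b - c * |u|) ^ 2 / (2 * c) := by positivity
    have hu : |u| ^ 2 = u ^ 2 := sq_abs u
    have hexpand : (b - c * |u|) ^ 2 / (2 * c) = b ^ 2 / (2 * c) - b * |u| + c / 2 * u ^ 2 := by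
      field_simp
      rw [← hu]
      ring
    nlinarith [sq_nonneg u]
  calc ∫⁻ u, ENNReal.ofReal (exp (b * |u| + a * u ^ 2)) ∂ν
      ≤ ∫⁻ u, ENNReal.ofReal (exp (b ^ 2 / (2 * c)) * exp (c * u ^ 2)) ∂ν :=
        lintegral_mono fun u => ENNReal.ofReal_le_ofReal (hpt u)
    _ < ∞ := (hν.const_mul _).lintegral_lt_top

theorem exp_mul_abs_le_of_lt_abs {b κ t u : ℝ} (hκ : 0 ≤ κ) (ht : 0 ≤ t) (htu : t < |u|) :
    exp (b * |u|) ≤ exp (-κ * t ^ 2) * exp (b * |u| + κ * u ^ 2) := by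
  rw [← exp_add, exp_le_exp]
  have : t ^ 2 ≤ u ^ 2 := by nlinarith [sq_abs u]
  nlinarith

theorem exp_bounds_of_abs_sub_le {a a₀ r : ℝ} (h : |a - a₀| ≤ r) :
    exp a₀ * exp (-r) ≤ exp a ∧ exp a ≤ exp a₀ * exp r := by
  rw [← exp_add, ← exp_add, exp_le_exp, exp_le_exp]
  constructor <;> linarith [abs_le.mp h]

theorem abs_gibbsExponent_sub_le {φ l : ℝ → ℝ} {Lφ Ll lam : ℝ} (hlam : 0 < lam)
    (hφ : ∀ a b, |φ a - φ b| ≤ Lφ * |a - b|) (hl : ∀ a b, |l a - l b| ≤ Ll * |a - b|)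
    (x ξ : ℝ) :
    |-(φ (x + ξ) + l ξ) / lam - -(φ 0 + l (-x)) / lam| ≤ (Lφ + Ll) / lam * |x + ξ| := by
  have hsplit : -(φ (x + ξ) + l ξ) / lam - -(φ 0 + l (-x)) / lam
      = -((φ (x + ξ) - φ 0) + (l ξ - l (-x))) / lam := by ring
  rw [hsplit, abs_div, abs_neg, abs_of_pos hlam, div_mul_eq_mul_div,
    div_le_div_iff_of_pos_right hlam]
  calc |(φ (x + ξ) - φ 0) + (l ξ - l (-x))|
      ≤ |φ (x + ξ) - φ 0| + |l ξ - l (-x)| := abs_add_le _ _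
    _ ≤ Lφ * |x + ξ - 0| + Ll * |ξ - -x| := add_le_add (hφ _ _) (hl _ _)
    _ = (Lφ + Ll) * |x + ξ| := by rw [sub_zero, sub_neg_eq_add, add_comm ξ]; ring

section Tail

variable {x C b : ℝ} {w : ℝ → ℝ}

theorem setLIntegral_Phi_tail_le (hw : ∀ ξ, w ξ ≤ C * exp (b * |x + ξ|)) (hC : 0 ≤ C)
    {κ t : ℝ} (hκ : 0 ≤ κ) (ht : 0 ≤ t) :
    ∫⁻ ξ in {ξ | t < |x + ξ|}, ENNReal.ofReal (w ξ) ∂Phi x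
      ≤ ENNReal.ofReal C * ENNReal.ofReal (exp (-κ * t ^ 2))
        * ∫⁻ u, ENNReal.ofReal (exp (b * |u| + κ * u ^ 2)) ∂gaussianReal 0 1 := by
  have hS : MeasurableSet {ξ : ℝ | t < |x + ξ|} := measurableSet_lt (by fun_prop) (by fun_prop)
  calc ∫⁻ ξ in {ξ | t < |x + ξ|}, ENNReal.ofReal (w ξ) ∂Phi x
      ≤ ∫⁻ ξ in {ξ | t < |x + ξ|}, ENNReal.ofReal (C * exp (-κ * t ^ 2)) *
          ENNReal.ofReal (exp (b * |x + ξ| + κ * (x + ξ) ^ 2)) ∂Phi x := by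
        refine setLIntegral_mono' hS fun ξ hξ => ?_
        rw [← ENNReal.ofReal_mul (by positivity), mul_assoc]
        exact ENNReal.ofReal_le_ofReal ((hw ξ).trans
          (mul_le_mul_of_nonneg_left (exp_mul_abs_le_of_lt_abs hκ ht hξ) hC))
    _ ≤ ∫⁻ ξ, ENNReal.ofReal (C * exp (-κ * t ^ 2)) *
          ENNReal.ofReal (exp (b * |x + ξ| + κ * (x + ξ) ^ 2)) ∂Phi x :=
        setLIntegral_le_lintegral _ _
    _ = _ := by
        rw [lintegral_const_mul' _ _ ENNReal.ofReal_ne_top,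
          lintegral_Phi_comp_add x fun u => ENNReal.ofReal (exp (b * |u| + κ * u ^ 2)),
          ENNReal.ofReal_mul hC]

theorem ofReal_mul_lintegral_gaussian_le_lintegral_Phi
    (hw : ∀ ξ, C * exp (-(b * |x + ξ|)) ≤ w ξ) :
    ENNReal.ofReal C * ∫⁻ u, ENNReal.ofReal (exp (-(b * |u|))) ∂gaussianReal 0 1
      ≤ ∫⁻ ξ, ENNReal.ofReal (w ξ) ∂Phi x := by
  rw [← lintegral_Phi_comp_add x fun u => ENNReal.ofReal (exp (-(b * |u|))),
    ← lintegral_const_mul' _ _ ENNReal.ofReal_ne_top]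
  refine lintegral_mono fun ξ => ?_
  rw [← ENNReal.ofReal_mul' (exp_pos _).le]
  exact ENNReal.ofReal_le_ofReal (hw ξ)

end Tail

theorem gibbsMeasure_tail_le {l φ : ℝ → ℝ} {Ll Lφ lam : ℝ} (hlam : 0 < lam)
    (hφ : ∀ a b, |φ a - φ b| ≤ Lφ * |a - b|) (hl : ∀ a b, |l a - l b| ≤ Ll * |a - b|)
    {κ : ℝ} (hκ : 0 ≤ κ) (x : ℝ) {t : ℝ} (ht : 0 ≤ t) :
    gibbsMeasure l lam φ x {ξ | t < |x + ξ|}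
      ≤ (∫⁻ u, ENNReal.ofReal (exp ((Lφ + Ll) / lam * |u| + κ * u ^ 2)) ∂gaussianReal 0 1)
          / (∫⁻ u, ENNReal.ofReal (exp (-((Lφ + Ll) / lam * |u|))) ∂gaussianReal 0 1)
        * ENNReal.ofReal (exp (-κ * t ^ 2)) := by
  set C := exp (-(φ 0 + l (-x)) / lam)
  have hw ξ := exp_bounds_of_abs_sub_le (abs_gibbsExponent_sub_le hlam hφ hl x ξ)
  calc gibbsMeasure l lam φ x {ξ | t < |x + ξ|}
      ≤ (∫⁻ ξ in {ξ | t < |x + ξ|},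
            ENNReal.ofReal (exp (-(φ (x + ξ) + l ξ) / lam)) ∂Phi x)
          / ∫⁻ ξ, ENNReal.ofReal (exp (-(φ (x + ξ) + l ξ) / lam)) ∂Phi x :=
        withDensity_ofReal_div_integral_apply_le (fun ξ => (exp_pos _).le) _
    _ ≤ ENNReal.ofReal C * ENNReal.ofReal (exp (-κ * t ^ 2))
          * (∫⁻ u, ENNReal.ofReal (exp ((Lφ + Ll) / lam * |u| + κ * u ^ 2))
              ∂gaussianReal 0 1)
          / (ENNReal.ofReal C
            * ∫⁻ u, ENNReal.ofReal (exp (-((Lφ + Ll) / lam * |u|))) ∂gaussianReal 0 1) :=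
        ENNReal.div_le_div (setLIntegral_Phi_tail_le (fun ξ => (hw ξ).2) (exp_pos _).le hκ ht)
          (ofReal_mul_lintegral_gaussian_le_lintegral_Phi fun ξ => (hw ξ).1)
    _ = _ := by
        rw [mul_assoc, ENNReal.mul_div_mul_left _ _ (by simp [C, exp_pos]) ENNReal.ofReal_ne_top,
          mul_comm (ENNReal.ofReal _), ENNReal.mul_div_right_comm]

theorem stmt_7_general (l : ℝ → ℝ) (K Ll : ℝ) (hl : CostHyp l K Ll)
    (lam : ℝ) (hlam : 0 < lam) (Lφ : ℝ)
    (φ : ℝ → ℝ) (hφlip : ∀ a b, |φ a - φ b| ≤ Lφ * |a - b|) :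
    ∃ κ₁ κ₂ : ℝ, 0 < κ₁ ∧ 0 < κ₂ ∧
      ∀ x t : ℝ, 0 ≤ t →
        gibbsMeasure l lam φ x {ξ : ℝ | t < |x + ξ|}
          ≤ ENNReal.ofReal (2 * κ₁ * Real.exp (-κ₂ * t ^ 2)) := by
  obtain ⟨c, hc, hγ⟩ := IsGaussian.exists_integrable_exp_sq (gaussianReal 0 1)
  simp only [Real.norm_eq_abs, sq_abs] at hγ
  set b := (Lφ + Ll) / lam
  set M := ∫⁻ u, ENNReal.ofReal (exp (b * |u| + c / 2 * u ^ 2)) ∂gaussianReal 0 1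
  set m := ∫⁻ u, ENNReal.ofReal (exp (-(b * |u|))) ∂gaussianReal 0 1
  have hM : M ≠ ∞ := (lintegral_ofReal_exp_mul_abs_add_mul_sq_lt_top hc hγ b le_rfl).ne
  have hm : m ≠ ∞ := by
    simpa [m] using (lintegral_ofReal_exp_mul_abs_add_mul_sq_lt_top hc hγ (-b) (a := 0)
      (by positivity)).ne
  have hM₀ : M ≠ 0 := (lintegral_ofReal_exp_pos (by fun_prop)).ne'
  have hm₀ : m ≠ 0 := (lintegral_ofReal_exp_pos (by fun_prop)).ne'
  have hκ₁ : 0 ≤ (M / m).toReal := ENNReal.toReal_nonneg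
  refine ⟨(M / m).toReal, c / 2, ENNReal.toReal_pos (ENNReal.div_pos hM₀ hm).ne'
    (ENNReal.div_ne_top hM hm₀), half_pos hc, fun x t ht => ?_⟩
  calc gibbsMeasure l lam φ x {ξ | t < |x + ξ|}
      ≤ M / m * ENNReal.ofReal (exp (-(c / 2) * t ^ 2)) :=
        gibbsMeasure_tail_le hlam hφlip hl.l_lip (half_pos hc).le x ht
    _ = ENNReal.ofReal ((M / m).toReal * exp (-(c / 2) * t ^ 2)) := by
        rw [ENNReal.ofReal_mul hκ₁, ENNReal.ofReal_toReal (ENNReal.div_ne_top hM hm₀)]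
    _ ≤ ENNReal.ofReal (2 * (M / m).toReal * exp (-(c / 2) * t ^ 2)) := by
        gcongr
        linarith

/-- sub-Gaussian tail bound for the Gibbs measures `μ_x`, with constants
depending only on `L_φ`, `L_l` and `λ` (not on `x`). -/
theorem stmt_7 (l : ℝ → ℝ) (K Ll : ℝ) (hl : CostHyp l K Ll)
    (lam : ℝ) (hlam : 0 < lam) (Lφ : ℝ)
    (φ : ℝ → ℝ) (hφlip : ∀ a b, |φ a - φ b| ≤ Lφ * |a - b|) (hφb : BddBelowFun φ) :
    ∃ κ₁ κ₂ : ℝ, 0 < κ₁ ∧ 0 < κ₂ ∧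
      ∀ x t : ℝ, 0 ≤ t →
        gibbsMeasure l lam φ x {ξ : ℝ | t < |x + ξ|}
          ≤ ENNReal.ofReal (2 * κ₁ * Real.exp (-κ₂ * t ^ 2)) :=
  stmt_7_general l K Ll hl lam hlam Lφ φ hφlip
end
end
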